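/- arXiv:2411.06641 — 5 statements merged into one kernel-verified Lean document; each statement's English description precedes it below -/
import Mathlib

section
/- Let d, n₁, n₂ be positive integers, let P₁ = (α₁,…,α_{n₁}) ∈ ℝ^{d×n₁} and P₂ = (β₁,…,β_{n₂}) ∈ ℝ^{d×n₂} be matrices whose columns each form a ℚ-linearly independent family, and let φ_p : ℝ^{n₁} → ℂ and ψ_p : ℝ^{n₂} → ℂ be 2π-periodic in each coordinate. Suppose γ₁,…,γ_{n₃} are chosen from among the vectors α₁,…,α_{n₁}, β₁,…,β_{n₂} so that γ₁,…,γ_{n₃} are ℚ-linearly independent and every α_i and every β_j is a ℚ-linear combination of γ₁,…,γ_{n₃}; set P = (γ₁,…,γ_{n₃}) ∈ ℝ^{d×n₃}. Then there exist a real number L > 0 and functions φ̌_p, ψ̌_p : ℝ^{n₃} → ℂ, each L-periodic in every coordinate, such that for all x ∈ ℝ^d one has φ_p(P₁ᵀx) = φ̌_p(Pᵀx) and ψ_p(P₂ᵀx) = ψ̌_p(Pᵀx); consequently φ_p(P₁ᵀx) + ψ_p(P₂ᵀx) = (φ̌_p + ψ̌_p)(Pᵀx) and φ_p(P₁ᵀx)·ψ_p(P₂ᵀx)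 = (φ̌_p·ψ̌_p)(Pᵀx) for all x ∈ ℝ^d. -/
/-!
Write each `α i` over `γ` with rational coefficients `c i j`; then `φc z := φp (c z)` satisfies
`φp (P₁ᵀ x) = φc (Pᵀ x)`. Shifting `z k` by `N * 2π`, where `N` is a common denominator of the
`c i k`, shifts every coordinate of `c z` by an integer multiple of `2π`, so `φc` is
`N * 2π`-periodic in each coordinate. A denominator common to the coefficients of both `α` and `β`
gives the one period `L` for `φc` and `ψc`.
-/

open scoped Real

def periods {V E : Type*} [AddCommGroup V] (f : V → E) : AddSubgroup V where
  carrier := {v | ∀ y, f (y + v) = f y}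
  zero_mem' y := by rw [add_zero]
  add_mem' {v w} hv hw y := by rw [← add_assoc, hw, hv]
  neg_mem' {v} hv y := by rw [← hv (y + -v), neg_add_cancel_right]

theorem Rat.exists_intCast_eq_mul_of_den_dvd {K : Type*} [Field K] [CharZero K] {q : ℚ}
    {N : ℕ} (h : q.den ∣ N) : ∃ m : ℤ, (q : K) * N = m := by
  obtain ⟨k, rfl⟩ := h
  refine ⟨q.num * k, ?_⟩
  rw [Nat.cast_mul, ← mul_assoc, ← Rat.cast_natCast, ← Rat.cast_mul, Rat.mul_den_eq_num]
  push_cast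
  ring

theorem exists_rat_coeffs_of_mem_span {n κ : Type*} [Fintype n] [Fintype κ] {a : n → ℝ}
    {γ : κ → n → ℝ} (h : a ∈ Submodule.span ℚ (Set.range γ)) :
    ∃ c : κ → ℚ, ∀ x : n → ℝ, a ⬝ᵥ x = ∑ j, (c j : ℝ) * (γ j ⬝ᵥ x) := by
  obtain ⟨c, rfl⟩ := (Submodule.mem_span_range_iff_exists_fun ℚ).mp h
  exact ⟨c, fun x => by simp only [sum_dotProduct, smul_dotProduct, Rat.smul_def]⟩

section

variable {ι κ E : Type*} [Fintype ι] [DecidableEq ι] [Fintype κ] [DecidableEq κ]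

def HasCoordPeriod (f : (ι → ℝ) → E) (T : ℝ) : Prop :=
  ∀ (y : ι → ℝ) (j : ι), f (fun i => y i + if i = j then T else 0) = f y

theorem HasCoordPeriod.map_add_intCast_mul {f : (ι → ℝ) → E} {T : ℝ} (hf : HasCoordPeriod f T)
    (y : ι → ℝ) (m : ι → ℤ) : f (fun i => y i + m i * T) = f y := by
  have hsum : (fun i => (m i : ℝ) * T) = ∑ j, m j • fun i => if i = j then T else 0 := by
    ext i
    simp [Finset.sum_apply]
  have hmem : (fun i => (m i : ℝ) * T) ∈ periods f := by
    rw [hsum]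
    exact (periods f).sum_mem fun j _ => (periods f).zsmul_mem (fun y => hf y j) _
  exact hmem y

theorem HasCoordPeriod.comp_ratMatrix {f : (ι → ℝ) → E} {T : ℝ} (hf : HasCoordPeriod f T)
    (c : ι → κ → ℚ) {N : ℕ} (hN : ∀ i j, (c i j).den ∣ N) :
    HasCoordPeriod (fun z : κ → ℝ => f fun i => ∑ j, (c i j : ℝ) * z j) (N * T) := by
  intro y k
  choose m hm using fun i => Rat.exists_intCast_eq_mul_of_den_dvd (K := ℝ) (hN i k)
  have hshift : (fun i => ∑ j, (c i j : ℝ) * (y j + if j = k then N * T else 0))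
      = fun i => (∑ j, (c i j : ℝ) * y j) + m i * T := by
    ext i
    simp [mul_add, Finset.sum_add_distrib, ← hm, mul_assoc]
  simp only [hshift]
  exact hf.map_add_intCast_mul _ m

theorem HasCoordPeriod.exists_parent_of_mem_span {n : Type*} [Fintype n] {f : (ι → ℝ) → E}
    {T : ℝ} (hf : HasCoordPeriod f T) {α : ι → n → ℝ} {γ : κ → n → ℝ}
    (hα : ∀ i, α i ∈ Submodule.span ℚ (Set.range γ)) :
    ∃ N : ℕ, 0 < N ∧ ∃ g : (κ → ℝ) → E, (∀ M : ℕ, N ∣ M → HasCoordPeriod g (M * T)) ∧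
      ∀ x, f (fun i => α i ⬝ᵥ x) = g (fun j => γ j ⬝ᵥ x) := by
  choose c hc using fun i => exists_rat_coeffs_of_mem_span (hα i)
  refine ⟨∏ i, ∏ j, (c i j).den, by positivity, _,
    fun M hM => hf.comp_ratMatrix c fun i j => ?_, fun x => by simp only [hc]⟩
  exact (Finset.dvd_prod_of_mem _ (Finset.mem_univ j)).trans
    ((Finset.dvd_prod_of_mem (fun i => ∏ j, (c i j).den) (Finset.mem_univ i)).trans hM)

end

theorem common_parent_functions_general
    (d n₁ n₂ n₃ : ℕ)
    (α : Fin n₁ → (Fin d → ℝ)) (β : Fin n₂ → (Fin d → ℝ)) (γ : Fin n₃ → (Fin d → ℝ))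
    (φp : (Fin n₁ → ℝ) → ℂ) (ψp : (Fin n₂ → ℝ) → ℂ)
    (hφp : ∀ (y : Fin n₁ → ℝ) (j : Fin n₁), φp (fun i => y i + if i = j then 2 * π else 0) = φp y)
    (hψp : ∀ (y : Fin n₂ → ℝ) (j : Fin n₂), ψp (fun i => y i + if i = j then 2 * π else 0) = ψp y)
    (hαspan : ∀ i : Fin n₁, α i ∈ Submodule.span ℚ (Set.range γ))
    (hβspan : ∀ i : Fin n₂, β i ∈ Submodule.span ℚ (Set.range γ)) :
    ∃ L : ℝ, 0 < L ∧ ∃ φc ψc : (Fin n₃ → ℝ) → ℂ,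
      (∀ (y : Fin n₃ → ℝ) (j : Fin n₃), φc (fun i => y i + if i = j then L else 0) = φc y) ∧
      (∀ (y : Fin n₃ → ℝ) (j : Fin n₃), ψc (fun i => y i + if i = j then L else 0) = ψc y) ∧
      (∀ x : Fin d → ℝ,
        φp (fun i => ∑ l, α i l * x l) = φc (fun j => ∑ l, γ j l * x l)) ∧
      (∀ x : Fin d → ℝ,
        ψp (fun i => ∑ l, β i l * x l) = ψc (fun j => ∑ l, γ j l * x l)) ∧
      (∀ x : Fin d → ℝ,
        φp (fun i => ∑ l, α i l * x l) + ψp (fun i => ∑ l, β i l * x l)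
          = φc (fun j => ∑ l, γ j l * x l) + ψc (fun j => ∑ l, γ j l * x l)) ∧
      (∀ x : Fin d → ℝ,
        φp (fun i => ∑ l, α i l * x l) * ψp (fun i => ∑ l, β i l * x l)
          = φc (fun j => ∑ l, γ j l * x l) * ψc (fun j => ∑ l, γ j l * x l)) := by
  obtain ⟨N₁, hN₁, φc, hφc, hφ⟩ := HasCoordPeriod.exists_parent_of_mem_span hφp hαspan
  obtain ⟨N₂, hN₂, ψc, hψc, hψ⟩ := HasCoordPeriod.exists_parent_of_mem_span hψp hβspan
  refine ⟨(N₁ * N₂ : ℕ) * (2 * π), by positivity, φc, ψc, hφc _ (dvd_mul_right _ _),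
    hψc _ (dvd_mul_left _ _), hφ, hψ, fun x => ?_, fun x => ?_⟩
  · exact congrArg₂ (· + ·) (hφ x) (hψ x)
  · exact congrArg₂ (· * ·) (hφ x) (hψ x)

/-- Proposition 1 of the paper: two quasiperiodic functions admit parent
functions over a common projection matrix built from a maximal ℚ-linearly
independent subfamily of the columns, and sums/products of quasiperiodic
functions have the corresponding sums/products as parent functions. -/
theorem common_parent_functions
    (d n₁ n₂ n₃ : ℕ) (hd : 0 < d) (hn₁ : 0 < n₁) (hn₂ : 0 < n₂)
    (α : Fin n₁ → (Fin d → ℝ)) (β : Fin n₂ → (Fin d → ℝ)) (γ : Fin n₃ → (Fin d → ℝ))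
    (hα : LinearIndependent ℚ α) (hβ : LinearIndependent ℚ β)
    (φp : (Fin n₁ → ℝ) → ℂ) (ψp : (Fin n₂ → ℝ) → ℂ)
    (hφp : ∀ (y : Fin n₁ → ℝ) (j : Fin n₁), φp (fun i => y i + if i = j then 2 * π else 0) = φp y)
    (hψp : ∀ (y : Fin n₂ → ℝ) (j : Fin n₂), ψp (fun i => y i + if i = j then 2 * π else 0) = ψp y)
    (hγ : LinearIndependent ℚ γ)
    (hγmem : ∀ j : Fin n₃, (∃ i, γ j = α i) ∨ (∃ i, γ j = β i))
    (hαspan : ∀ i : Fin n₁, α i ∈ Submodule.span ℚ (Set.range γ))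
    (hβspan : ∀ i : Fin n₂, β i ∈ Submodule.span ℚ (Set.range γ)) :
    ∃ L : ℝ, 0 < L ∧ ∃ φc ψc : (Fin n₃ → ℝ) → ℂ,
      (∀ (y : Fin n₃ → ℝ) (j : Fin n₃), φc (fun i => y i + if i = j then L else 0) = φc y) ∧
      (∀ (y : Fin n₃ → ℝ) (j : Fin n₃), ψc (fun i => y i + if i = j then L else 0) = ψc y) ∧
      (∀ x : Fin d → ℝ,
        φp (fun i => ∑ l, α i l * x l) = φc (fun j => ∑ l, γ j l * x l)) ∧
      (∀ x : Fin d → ℝ,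
        ψp (fun i => ∑ l, β i l * x l) = ψc (fun j => ∑ l, γ j l * x l)) ∧
      (∀ x : Fin d → ℝ,
        φp (fun i => ∑ l, α i l * x l) + ψp (fun i => ∑ l, β i l * x l)
          = φc (fun j => ∑ l, γ j l * x l) + ψc (fun j => ∑ l, γ j l * x l)) ∧
      (∀ x : Fin d → ℝ,
        φp (fun i => ∑ l, α i l * x l) * ψp (fun i => ∑ l, β i l * x l)
          = φc (fun j => ∑ l, γ j l * x l) * ψc (fun j => ∑ l, γ j l * x l)) :=
  common_parent_functions_general d n₁ n₂ n₃ α β γ φp ψp hφp hψp hαspan hβspan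
end

section
/- Let V, θ ∈ ℝ, let c ∈ ℂ, and let φ : ℝ → ℂ be differentiable with φ'(t) = −i (V + θ|φ(t)|²) φ(t) for all t and φ(0) = c. Then φ(t) = e^{−i t (V + θ|c|²)} · c for all t ∈ ℝ. -/
/-!
The coefficient `-i(V + θ|φ|²)` is purely imaginary, so `|φ|` is conserved along the flow.
With `|φ(t)| = |c|` the equation becomes linear with the constant coefficient
`-i(V + θ|c|²)`, whose solutions are exponentials.
-/

theorem Complex.norm_eq_of_hasDerivAt_mul_of_re_eq_zero {φ u : ℝ → ℂ}
    (hφ : ∀ t, HasDerivAt φ (u t * φ t) t) (hu : ∀ t, (u t).re = 0) (t : ℝ) :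
    ‖φ t‖ = ‖φ 0‖ := by
  have hsq (s : ℝ) : HasDerivAt (‖φ ·‖ ^ 2) 0 s := by
    have h := (hφ s).norm_sq
    rwa [Complex.inner, mul_assoc, Complex.mul_conj', ← Complex.ofReal_pow,
      Complex.re_mul_ofReal, hu, zero_mul, mul_zero] at h
  have hconst := is_const_of_deriv_eq_zero (fun s => (hsq s).differentiableAt)
    (fun s => (hsq s).deriv) t 0
  exact (pow_left_inj₀ (norm_nonneg _) (norm_nonneg _) two_ne_zero).1 hconst

theorem eq_exp_smul_of_hasDerivAt_smul {E : Type*} [NormedAddCommGroup E] [NormedSpace ℂ E]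
    {φ : ℝ → E} {k : ℂ} (hφ : ∀ t, HasDerivAt φ (k • φ t) t) (t : ℝ) :
    φ t = Complex.exp (t * k) • φ 0 := by
  have hexp (s : ℝ) :
      HasDerivAt (fun s : ℝ => Complex.exp (-(s * k))) (Complex.exp (-(s * k)) * -k) s :=
    (Complex.ofRealCLM.hasDerivAt.mul_const k).neg.cexp.congr_deriv (by simp)
  have hψ (s : ℝ) : HasDerivAt (fun s : ℝ => Complex.exp (-(s * k)) • φ s) 0 s :=
    ((hexp s).smul (hφ s)).congr_deriv (by rw [smul_smul, ← add_smul]; simp)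
  have hconst := is_const_of_deriv_eq_zero (fun s => (hψ s).differentiableAt)
    (fun s => (hψ s).deriv) t 0
  simp only [Complex.ofReal_zero, zero_mul, neg_zero, Complex.exp_zero, one_smul] at hconst
  rw [← hconst, smul_smul, ← Complex.exp_add, add_neg_cancel, Complex.exp_zero, one_smul]

/-- The exact solution of the potential subproblem `φ' = -i(V + θ|φ|²)φ`,
`φ(0) = c`, is the nonlinear phase flow `φ(t) = e^{-it(V + θ|c|²)} c`. -/
theorem potential_flow_solution
    (V θ : ℝ) (c : ℂ) (φ : ℝ → ℂ)
    (hφ : ∀ t : ℝ,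
      HasDerivAt φ (-Complex.I * ((V : ℂ) + (θ : ℂ) * ((‖φ t‖ : ℝ) : ℂ) ^ 2) * φ t) t)
    (h0 : φ 0 = c) :
    ∀ t : ℝ,
      φ t = Complex.exp (-Complex.I * (t : ℂ) * ((V : ℂ) + (θ : ℂ) * ((‖c‖ : ℝ) : ℂ) ^ 2)) * c := by
  have hnorm (t : ℝ) : ‖φ t‖ = ‖c‖ :=
    h0 ▸ Complex.norm_eq_of_hasDerivAt_mul_of_re_eq_zero hφ
      (fun s => by simp [← Complex.ofReal_pow]) t
  have hlin (t : ℝ) :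
      HasDerivAt φ ((-Complex.I * ((V : ℂ) + (θ : ℂ) * ((‖c‖ : ℝ) : ℂ) ^ 2)) • φ t) t := by
    simpa only [hnorm, smul_eq_mul] using hφ t
  intro t
  rw [eq_exp_smul_of_hasDerivAt_smul hlin, h0, smul_eq_mul]
  ring_nf
end

section
/- Let n be a positive integer, α > n/4, and θ ∈ ℝ. There exists a constant C > 0, depending only on n and α, such that the following holds. Let p, q, r : ℤ^n → ℂ have finite X_α-norms, and define the (absolutely convergent) functions φ_p(y) = Σ_k p_k e^{ik·y}, ψ_p(y) = Σ_k q_k e^{ik·y}, and ϕ_p(y) = Σ_k r_k e^{ik·y} on ℝ^n. Then ‖θ(|φ_p|² − |ψ_p|²) ϕ_p‖ ≤ C |θ| (‖p‖_{X_α} + ‖q‖_{X_α}) ‖r‖_{X_α} ‖φ_p − ψ_p‖. -/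
open MeasureTheory
open scoped Real

/-- The `X_α`-norm of a family of Fourier coefficients. -/
noncomputable def XalphaNorm (n : ℕ) (α : ℝ) (c : (Fin n → ℤ) → ℂ) : ℝ :=
  Real.sqrt (∑' k : Fin n → ℤ,
    (1 + Real.sqrt (∑ j, ((k j : ℝ)) ^ 2) ^ (4 * α)) * ‖c k‖ ^ 2)

/-- The Fourier series with coefficients `c`. -/
noncomputable def fourierSeries (n : ℕ) (c : (Fin n → ℤ) → ℂ) (y : Fin n → ℝ) : ℂ :=
  ∑' k : Fin n → ℤ, c k * Complex.exp (Complex.I * ((∑ j, (k j : ℝ) * y j : ℝ) : ℂ))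

/-- The normalized `L²` norm of a `2π`-periodic function over one period cell. -/
noncomputable def L2NormPeriodic (n : ℕ) (f : (Fin n → ℝ) → ℂ) : ℝ :=
  Real.sqrt ((((2 * π) ^ n)⁻¹ : ℝ) *
    ∫ y in Set.Icc (0 : Fin n → ℝ) (fun _ => 2 * π), ‖f y‖ ^ 2)

/-!
For `α > n/4` the inverse weights `(1 + |k|^{4α})⁻¹` are summable over `ℤⁿ` (a `p`-series over a
lattice of rank `n`), so by Cauchy–Schwarz the coefficients of an `X_α` sequence are absolutely
summable with `‖c‖_{ℓ¹} ≤ S^{1/2} ‖c‖_{X_α}`, where `S` is the sum of the inverse weights. Hence the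
three Fourier series are continuous and bounded by `S^{1/2}` times the `X_α`-norms. Pointwise,
`||φ|² - |ψ|²| = (|φ| + |ψ|) ||φ| - |ψ|| ≤ (|φ| + |ψ|) |φ - ψ|`, and integrating this pointwise
bound gives the theorem with `C = S`.
-/

theorem summable_sqrt_sum_sq_rpow_neg (n : ℕ) {s : ℝ} (hs : (n : ℝ) < s) :
    Summable fun k : Fin n → ℤ => √(∑ j, (k j : ℝ) ^ 2) ^ (-s) := by
  let b := (EuclideanSpace.basisFun (Fin n) ℝ).toBasis
  let L := Submodule.span ℤ (Set.range b)
  let e : (Fin n → ℤ) ≃ L := (b.restrictScalars ℤ).equivFun.symm.toEquiv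
  have hrank : Module.finrank ℤ L = n := by
    rw [Module.finrank_eq_card_basis (b.restrictScalars ℤ), Fintype.card_fin]
  refine (e.summable_iff.2 (ZLattice.summable_norm_rpow L (-s) (by rw [hrank]; linarith))).congr
    fun k => ?_
  have hcoord (j : Fin n) : (e k : EuclideanSpace ℝ (Fin n)) j = k j := by
    have h := b.restrictScalars_repr_apply ℤ (e k) j
    rw [← Module.Basis.equivFun_apply, show (b.restrictScalars ℤ).equivFun (e k) = k from
      (b.restrictScalars ℤ).equivFun.apply_symm_apply k] at h
    simpa [b] using h.symm
  show ‖(e k : EuclideanSpace ℝ (Fin n))‖ ^ (-s) = _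
  simp only [EuclideanSpace.norm_eq, hcoord, Real.norm_eq_abs, sq_abs]

noncomputable def XalphaWeight (n : ℕ) (α : ℝ) (k : Fin n → ℤ) : ℝ :=
  1 + √(∑ j, (k j : ℝ) ^ 2) ^ (4 * α)

theorem XalphaWeight_pos (n : ℕ) (α : ℝ) (k : Fin n → ℤ) : 0 < XalphaWeight n α k := by
  unfold XalphaWeight
  positivity

theorem XalphaNorm_nonneg (n : ℕ) (α : ℝ) (c : (Fin n → ℤ) → ℂ) : 0 ≤ XalphaNorm n α c :=
  Real.sqrt_nonneg _

theorem summable_inv_XalphaWeight {n : ℕ} {α : ℝ} (hα : (n : ℝ) / 4 < α) :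
    Summable fun k : Fin n → ℤ => (XalphaWeight n α k)⁻¹ := by
  refine Summable.of_norm_bounded_eventually
    (summable_sqrt_sum_sq_rpow_neg n (s := 4 * α) (by linarith)) ?_
  filter_upwards [Filter.eventually_cofinite_ne 0] with k hk
  obtain ⟨j, hj⟩ := Function.ne_iff.1 hk
  have hnorm : 0 < √(∑ j, (k j : ℝ) ^ 2) :=
    Real.sqrt_pos.2 (Finset.sum_pos' (fun i _ => sq_nonneg _)
      ⟨j, Finset.mem_univ j, sq_pos_of_ne_zero (Int.cast_ne_zero.2 hj)⟩)
  rw [Real.norm_of_nonneg (inv_nonneg.2 (XalphaWeight_pos n α k).le),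
    Real.rpow_neg hnorm.le]
  exact inv_anti₀ (Real.rpow_pos_of_pos hnorm _) (le_add_of_nonneg_left zero_le_one)

theorem summable_and_tsum_le_sqrt_mul_sqrt_of_weight {ι : Type*} {w x : ι → ℝ}
    (hw : ∀ i, 0 < w i) (hx : ∀ i, 0 ≤ x i) (hw_inv : Summable fun i => (w i)⁻¹)
    (hwx : Summable fun i => w i * x i ^ 2) :
    Summable x ∧ ∑' i, x i ≤ √(∑' i, (w i)⁻¹) * √(∑' i, w i * x i ^ 2) := by
  have hf (i : ι) : 0 ≤ (w i)⁻¹ := (inv_pos.2 (hw i)).le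
  have hg (i : ι) : 0 ≤ w i * x i ^ 2 := mul_nonneg (hw i).le (sq_nonneg _)
  have hsum (s : Finset ι) : ∑ i ∈ s, x i ≤ √(∑' i, (w i)⁻¹) * √(∑' i, w i * x i ^ 2) := by
    rw [← Real.sqrt_mul (tsum_nonneg hf)]
    refine Real.le_sqrt_of_sq_le ?_
    calc (∑ i ∈ s, x i) ^ 2 ≤ (∑ i ∈ s, (w i)⁻¹) * ∑ i ∈ s, w i * x i ^ 2 :=
          Finset.sum_sq_le_sum_mul_sum_of_sq_le_mul s (fun i _ => hf i) (fun i _ => hg i)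
            fun i _ => (inv_mul_cancel_left₀ (hw i).ne' _).ge
      _ ≤ (∑' i, (w i)⁻¹) * ∑' i, w i * x i ^ 2 :=
          mul_le_mul (hw_inv.sum_le_tsum s fun i _ => hf i) (hwx.sum_le_tsum s fun i _ => hg i)
            (Finset.sum_nonneg fun i _ => hg i) (tsum_nonneg hf)
  have hx_sum : Summable x := summable_of_sum_le hx hsum
  exact ⟨hx_sum, hx_sum.tsum_le_of_sum_le hsum⟩

theorem summable_norm_and_tsum_norm_le_XalphaNorm {n : ℕ} {α : ℝ} (hα : (n : ℝ) / 4 < α)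
    {c : (Fin n → ℤ) → ℂ} (hc : Summable fun k => XalphaWeight n α k * ‖c k‖ ^ 2) :
    Summable (fun k => ‖c k‖) ∧
      ∑' k, ‖c k‖ ≤ √(∑' k, (XalphaWeight n α k)⁻¹) * XalphaNorm n α c :=
  summable_and_tsum_le_sqrt_mul_sqrt_of_weight (XalphaWeight_pos n α) (fun _ => norm_nonneg _)
    (summable_inv_XalphaWeight hα) hc

theorem norm_fourierSeries_term {n : ℕ} (c : (Fin n → ℤ) → ℂ) (y : Fin n → ℝ) (k : Fin n → ℤ) :
    ‖c k * Complex.exp (Complex.I * ((∑ j, (k j : ℝ) * y j : ℝ) : ℂ))‖ = ‖c k‖ := by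
  rw [norm_mul, Complex.norm_exp_I_mul_ofReal, mul_one]

theorem norm_fourierSeries_le {n : ℕ} {c : (Fin n → ℤ) → ℂ} (hc : Summable fun k => ‖c k‖)
    (y : Fin n → ℝ) : ‖fourierSeries n c y‖ ≤ ∑' k, ‖c k‖ := by
  simp only [fourierSeries]
  refine (norm_tsum_le_tsum_norm ?_).trans_eq (tsum_congr (norm_fourierSeries_term c y))
  simpa only [norm_fourierSeries_term] using hc

theorem continuous_fourierSeries {n : ℕ} {c : (Fin n → ℤ) → ℂ}
    (hc : Summable fun k => ‖c k‖) : Continuous (fourierSeries n c) :=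
  continuous_tsum (fun _ => by fun_prop) hc fun k y => (norm_fourierSeries_term c y k).le

theorem L2NormPeriodic_le_mul {n : ℕ} {f g : (Fin n → ℝ) → ℂ} {M : ℝ} (hg : Continuous g)
    (hM : 0 ≤ M) (hfg : ∀ y, ‖f y‖ ≤ M * ‖g y‖) :
    L2NormPeriodic n f ≤ M * L2NormPeriodic n g := by
  have hint : ∫ y in Set.Icc (0 : Fin n → ℝ) (fun _ => 2 * π), ‖f y‖ ^ 2
      ≤ M ^ 2 * ∫ y in Set.Icc (0 : Fin n → ℝ) (fun _ => 2 * π), ‖g y‖ ^ 2 := by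
    rw [← integral_const_mul]
    refine integral_mono_of_nonneg (.of_forall fun y => sq_nonneg _)
      (by fun_prop : Continuous fun y => M ^ 2 * ‖g y‖ ^ 2).integrableOn_Icc
      (.of_forall fun y => ?_)
    simpa only [mul_pow] using pow_le_pow_left₀ (norm_nonneg _) (hfg y) 2
  unfold L2NormPeriodic
  rw [← Real.sqrt_sq hM, ← Real.sqrt_mul (sq_nonneg M), mul_left_comm]
  exact Real.sqrt_le_sqrt (mul_le_mul_of_nonneg_left hint (by positivity))

theorem norm_real_mul_sq_norm_sub_sq_norm_mul_le (θ : ℝ) (a b c : ℂ) :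
    ‖(θ : ℂ) * (((‖a‖ : ℝ) : ℂ) ^ 2 - ((‖b‖ : ℝ) : ℂ) ^ 2) * c‖
      ≤ |θ| * (‖a‖ + ‖b‖) * ‖c‖ * ‖a - b‖ := by
  have hdiff : ‖((‖a‖ : ℝ) : ℂ) ^ 2 - ((‖b‖ : ℝ) : ℂ) ^ 2‖ = (‖a‖ + ‖b‖) * |‖a‖ - ‖b‖| := by
    rw [← Complex.ofReal_pow, ← Complex.ofReal_pow, ← Complex.ofReal_sub, Complex.norm_real,
      Real.norm_eq_abs, sq_sub_sq, abs_mul, abs_of_nonneg (by positivity)]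
  rw [norm_mul, norm_mul, Complex.norm_real, Real.norm_eq_abs, hdiff]
  calc |θ| * ((‖a‖ + ‖b‖) * |‖a‖ - ‖b‖|) * ‖c‖ = |θ| * (‖a‖ + ‖b‖) * ‖c‖ * |‖a‖ - ‖b‖| := by ring
    _ ≤ |θ| * (‖a‖ + ‖b‖) * ‖c‖ * ‖a - b‖ := by gcongr; exact abs_norm_sub_norm_le a b

theorem nonlinear_potential_difference_bound_general
    (n : ℕ) (α : ℝ) (hα : (n : ℝ) / 4 < α) (θ : ℝ) :
    ∃ C : ℝ, 0 < C ∧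
      ∀ p q r : (Fin n → ℤ) → ℂ,
        Summable (fun k : Fin n → ℤ =>
          (1 + Real.sqrt (∑ j, ((k j : ℝ)) ^ 2) ^ (4 * α)) * ‖p k‖ ^ 2) →
        Summable (fun k : Fin n → ℤ =>
          (1 + Real.sqrt (∑ j, ((k j : ℝ)) ^ 2) ^ (4 * α)) * ‖q k‖ ^ 2) →
        Summable (fun k : Fin n → ℤ =>
          (1 + Real.sqrt (∑ j, ((k j : ℝ)) ^ 2) ^ (4 * α)) * ‖r k‖ ^ 2) →
        L2NormPeriodic n (fun y =>
            (θ : ℂ) * (((‖fourierSeries n p y‖ : ℝ) : ℂ) ^ 2 -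
              ((‖fourierSeries n q y‖ : ℝ) : ℂ) ^ 2) * fourierSeries n r y)
          ≤ C * |θ| * (XalphaNorm n α p + XalphaNorm n α q) * XalphaNorm n α r *
              L2NormPeriodic n (fun y => fourierSeries n p y - fourierSeries n q y) := by
  set S := ∑' k : Fin n → ℤ, (XalphaWeight n α k)⁻¹
  have hS : 0 < S := (summable_inv_XalphaWeight hα).tsum_pos
    (fun k => (inv_pos.2 (XalphaWeight_pos n α k)).le) 0 (inv_pos.2 (XalphaWeight_pos n α 0))
  refine ⟨S, hS, fun p q r hp hq hr => ?_⟩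
  obtain ⟨hp₁, hp_le⟩ := summable_norm_and_tsum_norm_le_XalphaNorm hα hp
  obtain ⟨hq₁, hq_le⟩ := summable_norm_and_tsum_norm_le_XalphaNorm hα hq
  obtain ⟨hr₁, hr_le⟩ := summable_norm_and_tsum_norm_le_XalphaNorm hα hr
  have hXp := XalphaNorm_nonneg n α p
  have hXq := XalphaNorm_nonneg n α q
  have hXr := XalphaNorm_nonneg n α r
  refine L2NormPeriodic_le_mul ((continuous_fourierSeries hp₁).sub (continuous_fourierSeries hq₁))
    (by positivity) fun y => ?_
  calc _ ≤ |θ| * (‖fourierSeries n p y‖ + ‖fourierSeries n q y‖) * ‖fourierSeries n r y‖ *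
        ‖fourierSeries n p y - fourierSeries n q y‖ := norm_real_mul_sq_norm_sub_sq_norm_mul_le ..
    _ ≤ |θ| * (√S * XalphaNorm n α p + √S * XalphaNorm n α q) * (√S * XalphaNorm n α r) *
        ‖fourierSeries n p y - fourierSeries n q y‖ := by
      gcongr
      exacts [(norm_fourierSeries_le hp₁ y).trans hp_le, (norm_fourierSeries_le hq₁ y).trans hq_le,
        (norm_fourierSeries_le hr₁ y).trans hr_le]
    _ = _ := by
      linear_combination |θ| * (XalphaNorm n α p + XalphaNorm n α q) * XalphaNorm n α r *
        ‖fourierSeries n p y - fourierSeries n q y‖ * Real.mul_self_sqrt hS.le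

/-- For `α > n/4`: the difference bound
`‖θ(|φ_p|² − |ψ_p|²)ϕ_p‖ ≤ C|θ|(‖p‖_{X_α} + ‖q‖_{X_α})‖r‖_{X_α}‖φ_p − ψ_p‖`,
where `φ_p, ψ_p, ϕ_p` are the Fourier series of `p, q, r`. -/
theorem nonlinear_potential_difference_bound
    (n : ℕ) (hn : 0 < n) (α : ℝ) (hα : (n : ℝ) / 4 < α) (θ : ℝ) :
    ∃ C : ℝ, 0 < C ∧
      ∀ p q r : (Fin n → ℤ) → ℂ,
        Summable (fun k : Fin n → ℤ =>
          (1 + Real.sqrt (∑ j, ((k j : ℝ)) ^ 2) ^ (4 * α)) * ‖p k‖ ^ 2) →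
        Summable (fun k : Fin n → ℤ =>
          (1 + Real.sqrt (∑ j, ((k j : ℝ)) ^ 2) ^ (4 * α)) * ‖q k‖ ^ 2) →
        Summable (fun k : Fin n → ℤ =>
          (1 + Real.sqrt (∑ j, ((k j : ℝ)) ^ 2) ^ (4 * α)) * ‖r k‖ ^ 2) →
        L2NormPeriodic n (fun y =>
            (θ : ℂ) * (((‖fourierSeries n p y‖ : ℝ) : ℂ) ^ 2 -
              ((‖fourierSeries n q y‖ : ℝ) : ℂ) ^ 2) * fourierSeries n r y)
          ≤ C * |θ| * (XalphaNorm n α p + XalphaNorm n α q) * XalphaNorm n α r *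
              L2NormPeriodic n (fun y => fourierSeries n p y - fourierSeries n q y) :=
  nonlinear_potential_difference_bound_general n α hα θ
end

section
/- Let n be a positive integer and α > n/4. There exists a constant C > 0, depending only on n and α, such that for all u, w : ℤ^n → ℂ with ‖u‖_{X_α} < ∞ and ‖w‖_{X_α} < ∞, the convolution (u * w)_k = Σ_{j∈ℤ^n} u_j w_{k−j} is well defined for every k ∈ ℤ^n and satisfies ‖u * w‖_{X_α} ≤ C ‖u‖_{X_α} ‖w‖_{X_α}; that is, Σ_{k∈ℤ^n} (1+‖k‖₂^{4α}) |Σ_{j∈ℤ^n} u_j w_{k−j}|² ≤ C² (Σ_{k} (1+‖k‖₂^{4α})|u_k|²)(Σ_{k} (1+‖k‖₂^{4α})|w_k|²). -/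
/-!
Put `σ = √V` for the weight `V k = 1 + ‖k‖^{4α}`. The triangle inequality gives
`V k ≤ 2^{4α} (V j + V (k - j))`, hence `σ k ≤ κ (σ j + σ (k - j))`, so `σ · |u ∗ w|` is bounded
by `κ ((σ|u|) ∗ |w| + |u| ∗ (σ|w|))`. Writing `|w| = σ⁻¹ · (σ|w|)`, Cauchy–Schwarz in `j` followed
by summation in `k` bounds `‖(σ|u|) ∗ |w|‖₂` by `‖σ|u|‖₂ ‖σ⁻¹‖₂ ‖σ|w|‖₂`, and
`‖σ⁻¹‖₂² = ∑ 1 / V` is finite because `4α > n`. All estimates are made in `ℝ≥0∞`, where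
nothing has to be known to converge; finiteness of the final bound then gives the summability of
each convolution sum.
-/

open scoped ENNReal

namespace ENNReal

variable {ι G : Type*} [AddCommGroup G]

theorem tsum_mul_sq_le (f g : ι → ℝ≥0∞) :
    (∑' i, f i * g i) ^ 2 ≤ (∑' i, f i ^ 2) * ∑' i, g i ^ 2 := by
  suffices ∑' i, f i * g i ≤ ((∑' i, f i ^ 2) * ∑' i, g i ^ 2) ^ (2⁻¹ : ℝ) by
    calc _ ≤ (((∑' i, f i ^ 2) * ∑' i, g i ^ 2) ^ (2⁻¹ : ℝ)) ^ 2 := by gcongr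
      _ = _ := by rw [← ENNReal.rpow_natCast, ← ENNReal.rpow_mul]; norm_num
  rw [ENNReal.tsum_eq_iSup_sum]
  refine iSup_le fun s => ?_
  calc ∑ i ∈ s, f i * g i
      ≤ (∑ i ∈ s, f i ^ (2 : ℝ)) ^ (1 / 2 : ℝ) * (∑ i ∈ s, g i ^ (2 : ℝ)) ^ (1 / 2 : ℝ) :=
        ENNReal.inner_le_Lp_mul_Lq s f g .two_two
    _ ≤ (∑' i, f i ^ 2) ^ (2⁻¹ : ℝ) * (∑' i, g i ^ 2) ^ (2⁻¹ : ℝ) := by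
        simp only [ENNReal.rpow_two, one_div]
        gcongr <;> exact ENNReal.sum_le_tsum s
    _ = _ := (ENNReal.mul_rpow_of_nonneg _ _ (by norm_num)).symm

theorem tsum_tsum_mul_sub (f g : G → ℝ≥0∞) :
    ∑' k, ∑' j, f j * g (k - j) = (∑' j, f j) * ∑' j, g j := by
  rw [ENNReal.tsum_comm, ← ENNReal.tsum_mul_right]
  refine tsum_congr fun j => ?_
  rw [ENNReal.tsum_mul_left]
  exact congrArg (f j * ·) ((Equiv.subRight j).tsum_eq g)

/-- Young's inequality `‖a ∗ c‖₂ ≤ ‖a‖₂ ‖c‖₁` combined with Cauchy–Schwarz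
`‖τ b‖₁ ≤ ‖τ‖₂ ‖b‖₂`. -/
theorem tsum_conv_mul_sq_le (a τ b : G → ℝ≥0∞) :
    ∑' k, (∑' j, a j * (τ (k - j) * b (k - j))) ^ 2
      ≤ (∑' j, a j ^ 2) * (∑' j, τ j ^ 2) * ∑' j, b j ^ 2 := by
  calc ∑' k, (∑' j, a j * (τ (k - j) * b (k - j))) ^ 2
      ≤ ∑' k, (∑' j, a j ^ 2 * τ (k - j) ^ 2) * ∑' j, b (k - j) ^ 2 := by
        gcongr with k
        simpa only [mul_assoc, mul_pow] using
          tsum_mul_sq_le (fun j => a j * τ (k - j)) (fun j => b (k - j))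
    _ = (∑' k, ∑' j, a j ^ 2 * τ (k - j) ^ 2) * ∑' j, b j ^ 2 := by
        rw [← ENNReal.tsum_mul_right]
        refine tsum_congr fun k => congrArg (_ * ·) ((Equiv.subLeft k).tsum_eq (b · ^ 2))
    _ = _ := by rw [tsum_tsum_mul_sub (a · ^ 2) (τ · ^ 2)]

protected theorem add_sq_le (x y : ℝ≥0∞) : (x + y) ^ 2 ≤ 2 * (x ^ 2 + y ^ 2) := by
  have h := ENNReal.rpow_add_le_mul_rpow_add_rpow x y one_le_two
  norm_num [ENNReal.rpow_two] at h
  exact h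

theorem tsum_weight_mul_conv_sq_le (σ : G → ℝ≥0∞) (hσ0 : ∀ k, σ k ≠ 0) (hσ : ∀ k, σ k ≠ ∞)
    {κ : ℝ≥0∞} (hsub : ∀ k j, σ k ≤ κ * (σ j + σ (k - j))) (f g : G → ℝ≥0∞) :
    ∑' k, (σ k * ∑' j, f j * g (k - j)) ^ 2
      ≤ 4 * κ ^ 2 * (∑' k, (σ k)⁻¹ ^ 2) * (∑' k, (σ k * f k) ^ 2) * ∑' k, (σ k * g k) ^ 2 := by
  set F := fun k => σ k * f k
  set H := fun k => σ k * g k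
  have hf : ∀ k, f k = (σ k)⁻¹ * F k := fun k => (ENNReal.inv_mul_cancel_left (hσ0 k) (hσ k)).symm
  have hg : ∀ k, g k = (σ k)⁻¹ * H k := fun k => (ENNReal.inv_mul_cancel_left (hσ0 k) (hσ k)).symm
  have hpt : ∀ k, σ k * ∑' j, f j * g (k - j) ≤
      κ * (∑' j, F j * ((σ (k - j))⁻¹ * H (k - j)) + ∑' j, H j * ((σ (k - j))⁻¹ * F (k - j))) := by
    intro k
    have hswap : ∑' j, f j * H (k - j) = ∑' j, H j * f (k - j) := by
      rw [← (Equiv.subLeft k).tsum_eq]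
      simp only [Equiv.subLeft_apply, _root_.sub_sub_cancel, mul_comm]
    calc σ k * ∑' j, f j * g (k - j) = ∑' j, σ k * (f j * g (k - j)) := ENNReal.tsum_mul_left.symm
      _ ≤ ∑' j, κ * (σ j + σ (k - j)) * (f j * g (k - j)) := by gcongr with j; exact hsub k j
      _ = κ * (∑' j, F j * g (k - j) + ∑' j, f j * H (k - j)) := by
        rw [← ENNReal.tsum_add, ← ENNReal.tsum_mul_left]
        exact tsum_congr fun j => by simp only [F, H]; ring
      _ = _ := by simp only [hswap, ← hf, ← hg]
  calc ∑' k, (σ k * ∑' j, f j * g (k - j)) ^ 2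
      ≤ ∑' k, (κ * (∑' j, F j * ((σ (k - j))⁻¹ * H (k - j))
          + ∑' j, H j * ((σ (k - j))⁻¹ * F (k - j)))) ^ 2 :=
        ENNReal.tsum_le_tsum fun k => pow_le_pow_left₀ zero_le (hpt k) 2
    _ ≤ ∑' k, 2 * κ ^ 2 * ((∑' j, F j * ((σ (k - j))⁻¹ * H (k - j))) ^ 2
          + (∑' j, H j * ((σ (k - j))⁻¹ * F (k - j))) ^ 2) := by
        gcongr with k
        rw [mul_pow, mul_comm 2 (κ ^ 2), mul_assoc]
        gcongr
        exact ENNReal.add_sq_le _ _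
    _ = 2 * κ ^ 2 * (∑' k, (∑' j, F j * ((σ (k - j))⁻¹ * H (k - j))) ^ 2
          + ∑' k, (∑' j, H j * ((σ (k - j))⁻¹ * F (k - j))) ^ 2) := by
        rw [ENNReal.tsum_mul_left, ENNReal.tsum_add]
    _ ≤ 2 * κ ^ 2 * ((∑' k, F k ^ 2) * (∑' k, (σ k)⁻¹ ^ 2) * (∑' k, H k ^ 2)
          + (∑' k, H k ^ 2) * (∑' k, (σ k)⁻¹ ^ 2) * (∑' k, F k ^ 2)) := by
        gcongr <;> exact tsum_conv_mul_sq_le _ _ _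
    _ = _ := by ring

end ENNReal

theorem Real.sqrt_add_le_add_sqrt {x y : ℝ} (hx : 0 ≤ x) (hy : 0 ≤ y) : √(x + y) ≤ √x + √y := by
  rw [Real.sqrt_le_left (by positivity)]
  nlinarith [Real.sq_sqrt hx, Real.sq_sqrt hy, Real.sqrt_nonneg x, Real.sqrt_nonneg y]

theorem ofReal_sqrt_mul_enorm_sq {E : Type*} [SeminormedAddGroup E] {v : ℝ} (hv : 0 ≤ v) (z : E) :
    (ENNReal.ofReal √v * ‖z‖ₑ) ^ 2 = ENNReal.ofReal (v * ‖z‖ ^ 2) := by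
  rw [← ofReal_norm, ← ENNReal.ofReal_mul (Real.sqrt_nonneg v),
    ← ENNReal.ofReal_pow (by positivity), mul_pow, Real.sq_sqrt hv]

section WeightedConvolution

variable {G : Type*} [AddCommGroup G] {V : G → ℝ} {K : ℝ}

theorem nonneg_of_le_mul_add (hV : ∀ k, 0 < V k) (hK : ∀ k j, V k ≤ K * (V j + V (k - j))) :
    0 ≤ K := by
  have h := hK 0 0
  rw [sub_self] at h
  nlinarith [hV 0]

theorem tsum_ofReal_weight_mul_conv_le (hV : ∀ k, 0 < V k)
    (hK : ∀ k j, V k ≤ K * (V j + V (k - j))) (u w : G → ℂ) :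
    ∑' k, (ENNReal.ofReal √(V k) * ∑' j, ‖u j‖ₑ * ‖w (k - j)‖ₑ) ^ 2
      ≤ 4 * ENNReal.ofReal K * (∑' k, ENNReal.ofReal (V k)⁻¹)
        * (∑' k, ENNReal.ofReal (V k * ‖u k‖ ^ 2)) * ∑' k, ENNReal.ofReal (V k * ‖w k‖ ^ 2) := by
  have hsub : ∀ k j, ENNReal.ofReal √(V k)
      ≤ ENNReal.ofReal √K * (ENNReal.ofReal √(V j) + ENNReal.ofReal √(V (k - j))) := by
    intro k j
    rw [← ENNReal.ofReal_add (Real.sqrt_nonneg _) (Real.sqrt_nonneg _),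
      ← ENNReal.ofReal_mul (Real.sqrt_nonneg _)]
    refine ENNReal.ofReal_le_ofReal ?_
    calc √(V k) ≤ √(K * (V j + V (k - j))) := Real.sqrt_le_sqrt (hK k j)
      _ = √K * √(V j + V (k - j)) := Real.sqrt_mul' _ (add_pos (hV j) (hV _)).le
      _ ≤ √K * (√(V j) + √(V (k - j))) := by
        gcongr; exact Real.sqrt_add_le_add_sqrt (hV j).le (hV _).le
  have h := ENNReal.tsum_weight_mul_conv_sq_le (fun k => ENNReal.ofReal √(V k))
    (fun k => (ENNReal.ofReal_pos.2 (Real.sqrt_pos.2 (hV k))).ne') (fun _ => ENNReal.ofReal_ne_top)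
    hsub (fun j => ‖u j‖ₑ) (fun j => ‖w j‖ₑ)
  have hinv : ∀ k, (ENNReal.ofReal √(V k))⁻¹ ^ 2 = ENNReal.ofReal (V k)⁻¹ := fun k => by
    rw [← ENNReal.ofReal_inv_of_pos (Real.sqrt_pos.2 (hV k)), ← ENNReal.ofReal_pow (by positivity),
      inv_pow, Real.sq_sqrt (hV k).le]
  have hK0 : 0 ≤ K := nonneg_of_le_mul_add hV hK
  simpa only [hinv, ofReal_sqrt_mul_enorm_sq (hV _).le, ← ENNReal.ofReal_pow (Real.sqrt_nonneg K),
    Real.sq_sqrt hK0] using h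

theorem summable_conv_and_tsum_weight_mul_norm_conv_sq_le (hV : ∀ k, 0 < V k)
    (hK : ∀ k j, V k ≤ K * (V j + V (k - j))) (hZ : Summable fun k => (V k)⁻¹) {u w : G → ℂ}
    (hu : Summable fun k => V k * ‖u k‖ ^ 2) (hw : Summable fun k => V k * ‖w k‖ ^ 2) :
    (∀ k, Summable fun j => u j * w (k - j)) ∧
      ∑' k, V k * ‖∑' j, u j * w (k - j)‖ ^ 2
        ≤ 4 * K * (∑' k, (V k)⁻¹) * (∑' k, V k * ‖u k‖ ^ 2) * ∑' k, V k * ‖w k‖ ^ 2 := by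
  have hK0 : 0 ≤ K := nonneg_of_le_mul_add hV hK
  have hV0 : ∀ k, 0 ≤ V k := fun k => (hV k).le
  have hZ0 : 0 ≤ ∑' k, (V k)⁻¹ := tsum_nonneg fun k => inv_nonneg.2 (hV0 k)
  have hu0 : 0 ≤ ∑' k, V k * ‖u k‖ ^ 2 := tsum_nonneg fun k => by have := hV0 k; positivity
  have hw0 : 0 ≤ ∑' k, V k * ‖w k‖ ^ 2 := tsum_nonneg fun k => by have := hV0 k; positivity
  have hbound := tsum_ofReal_weight_mul_conv_le hV hK u w
  rw [← ENNReal.ofReal_tsum_of_nonneg (fun k => inv_nonneg.2 (hV0 k)) hZ,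
    ← ENNReal.ofReal_tsum_of_nonneg (fun k => by have := hV0 k; positivity) hu,
    ← ENNReal.ofReal_tsum_of_nonneg (fun k => by have := hV0 k; positivity) hw,
    ← ENNReal.ofReal_ofNat 4, ← ENNReal.ofReal_mul (by norm_num),
    ← ENNReal.ofReal_mul (by positivity), ← ENNReal.ofReal_mul (by positivity),
    ← ENNReal.ofReal_mul (by positivity)] at hbound
  refine ⟨fun k => Summable.of_enorm ?_, ?_⟩
  · have hk := ne_top_of_le_ne_top ENNReal.ofReal_ne_top ((ENNReal.le_tsum k).trans hbound)
    simp only [enorm_mul]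
    intro htop
    rw [htop, ENNReal.mul_top (ENNReal.ofReal_pos.2 (Real.sqrt_pos.2 (hV k))).ne'] at hk
    simp at hk
  · calc ∑' k, V k * ‖∑' j, u j * w (k - j)‖ ^ 2
        = (∑' k, ENNReal.ofReal (V k * ‖∑' j, u j * w (k - j)‖ ^ 2)).toReal := by
          rw [ENNReal.tsum_toReal_eq fun _ => ENNReal.ofReal_ne_top]
          exact tsum_congr fun k => (ENNReal.toReal_ofReal (by have := hV0 k; positivity)).symm
      _ ≤ _ := by
          refine ENNReal.toReal_le_of_le_ofReal (by positivity) (le_trans ?_ hbound)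
          refine ENNReal.tsum_le_tsum fun k => ?_
          rw [← ofReal_sqrt_mul_enorm_sq (hV k).le]
          gcongr
          exact enorm_tsum_le_tsum_enorm.trans_eq (by simp only [enorm_mul])

end WeightedConvolution

theorem Real.add_rpow_le_two_rpow_mul {a b s : ℝ} (ha : 0 ≤ a) (hb : 0 ≤ b) (hs : 0 ≤ s) :
    (a + b) ^ s ≤ 2 ^ s * (a ^ s + b ^ s) := by
  calc (a + b) ^ s ≤ (2 * max a b) ^ s := by
        gcongr; linarith [le_max_left a b, le_max_right a b]
    _ = 2 ^ s * max a b ^ s := Real.mul_rpow zero_le_two (le_max_of_le_left ha)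
    _ ≤ 2 ^ s * (a ^ s + b ^ s) := by
        gcongr
        rcases max_cases a b with ⟨h, -⟩ | ⟨h, -⟩ <;> rw [h] <;>
          linarith [Real.rpow_nonneg ha s, Real.rpow_nonneg hb s]

theorem Real.summable_one_add_abs_int_rpow_neg {p : ℝ} (hp : 1 < p) :
    Summable fun m : ℤ => (1 + |(m : ℝ)|) ^ (-p) := by
  refine (Real.summable_abs_int_rpow hp).of_norm_bounded_eventually ?_
  filter_upwards [(Set.finite_singleton (0 : ℤ)).compl_mem_cofinite] with m hm
  rw [Real.norm_of_nonneg (by positivity)]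
  exact Real.rpow_le_rpow_of_nonpos (by simpa using hm) (by linarith) (by linarith)

theorem Summable.prod_fin_pi {β : Type*} {h : β → ℝ} (hs : Summable h) (h0 : ∀ b, 0 ≤ h b) :
    ∀ n : ℕ, Summable fun k : Fin n → β => ∏ i, h (k i)
  | 0 => .of_finite
  | n + 1 => by
    refine (Fin.consEquiv fun _ => β).summable_iff.1 ?_
    simpa [Function.comp_def, Fin.prod_univ_succ] using
      hs.mul_of_nonneg (hs.prod_fin_pi h0 n) h0 fun k => Finset.prod_nonneg fun i _ => h0 (k i)

section IntegerLattice

variable {n : ℕ}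

theorem sqrt_sum_sq_intCast_add_le (a b : Fin n → ℤ) :
    √(∑ i, ((a + b) i : ℝ) ^ 2) ≤ √(∑ i, (a i : ℝ) ^ 2) + √(∑ i, (b i : ℝ) ^ 2) := by
  have h (c : Fin n → ℤ) : √(∑ i, (c i : ℝ) ^ 2)
      = ‖(WithLp.toLp 2 fun i => (c i : ℝ) : EuclideanSpace ℝ (Fin n))‖ := by
    simp [EuclideanSpace.norm_eq]
  have hadd : (WithLp.toLp 2 fun i => ((a + b) i : ℝ) : EuclideanSpace ℝ (Fin n))
      = WithLp.toLp 2 (fun i => (a i : ℝ)) + WithLp.toLp 2 (fun i => (b i : ℝ)) := by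
    ext i
    simp
  rw [h, h, h, hadd]
  exact norm_add_le _ _

theorem one_add_sqrt_sum_sq_rpow_le {s : ℝ} (hs : 0 ≤ s) (k j : Fin n → ℤ) :
    1 + √(∑ i, (k i : ℝ) ^ 2) ^ s ≤
      2 ^ s * ((1 + √(∑ i, (j i : ℝ) ^ 2) ^ s) + (1 + √(∑ i, ((k - j) i : ℝ) ^ 2) ^ s)) := by
  have htri := sqrt_sum_sq_intCast_add_le j (k - j)
  rw [add_sub_cancel] at htri
  have h := (Real.rpow_le_rpow (Real.sqrt_nonneg _) htri hs).trans
    (Real.add_rpow_le_two_rpow_mul (Real.sqrt_nonneg _) (Real.sqrt_nonneg _) hs)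
  nlinarith [Real.one_le_rpow one_le_two hs]

theorem summable_inv_one_add_sqrt_sum_sq_rpow {s : ℝ} (hs : n < s) :
    Summable fun k : Fin n → ℤ => (1 + √(∑ i, (k i : ℝ) ^ 2) ^ s)⁻¹ := by
  obtain rfl | hn := n.eq_zero_or_pos
  · exact .of_finite
  have hn' : (0 : ℝ) < n := by exact_mod_cast hn
  have hs0 : 0 ≤ s := hn'.le.trans hs.le
  have hp : 1 < s / n := (one_lt_div hn').2 hs
  refine .of_nonneg_of_le (fun k => by positivity) (fun k => ?_)
    (((Real.summable_one_add_abs_int_rpow_neg hp).prod_fin_pi (fun m => by positivity) n).mul_left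
      (2 ^ s))
  set N := √(∑ i, (k i : ℝ) ^ 2)
  have hprod : ∏ i, (1 + |(k i : ℝ)|) ≤ (1 + N) ^ n :=
    calc ∏ i, (1 + |(k i : ℝ)|) ≤ ∏ _i : Fin n, (1 + N) :=
          Finset.prod_le_prod (fun i _ => by positivity) fun i _ => by
            gcongr
            exact Real.abs_le_sqrt (Finset.single_le_sum (f := fun i => (k i : ℝ) ^ 2)
              (fun i _ => sq_nonneg _) (Finset.mem_univ i))
      _ = (1 + N) ^ n := by simp
  calc (1 + N ^ s)⁻¹ ≤ 2 ^ s * ((1 + N) ^ s)⁻¹ := by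
        rw [← div_eq_mul_inv, le_div_iff₀ (by positivity), inv_mul_le_iff₀ (by positivity),
          mul_comm]
        simpa using Real.add_rpow_le_two_rpow_mul zero_le_one (Real.sqrt_nonneg _) hs0
    _ = 2 ^ s * ((1 + N) ^ n) ^ (-(s / n)) := by
        rw [← Real.rpow_natCast, ← Real.rpow_mul (by positivity), mul_neg,
          mul_div_cancel₀ _ hn'.ne', Real.rpow_neg (by positivity)]
    _ ≤ 2 ^ s * (∏ i, (1 + |(k i : ℝ)|)) ^ (-(s / n)) := by
        gcongr 2 ^ s * ?_
        exact Real.rpow_le_rpow_of_nonpos (Finset.prod_pos fun i _ => by positivity) hprod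
          (neg_nonpos.2 (by positivity))
    _ = 2 ^ s * ∏ i, (1 + |(k i : ℝ)|) ^ (-(s / n)) := by
        rw [Real.finsetProd_rpow _ _ (fun i _ => by positivity)]

end IntegerLattice

theorem xAlpha_convolution_algebra_general
    (n : ℕ) (α : ℝ) (hα : (n : ℝ) / 4 < α) :
    ∃ C : ℝ, 0 < C ∧
      ∀ u w : (Fin n → ℤ) → ℂ,
        Summable (fun k : Fin n → ℤ =>
          (1 + Real.sqrt (∑ j, ((k j : ℝ)) ^ 2) ^ (4 * α)) * ‖u k‖ ^ 2) →
        Summable (fun k : Fin n → ℤ =>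
          (1 + Real.sqrt (∑ j, ((k j : ℝ)) ^ 2) ^ (4 * α)) * ‖w k‖ ^ 2) →
        (∀ k : Fin n → ℤ, Summable (fun j : Fin n → ℤ => u j * w (k - j))) ∧
        ∑' k : Fin n → ℤ,
            (1 + Real.sqrt (∑ j, ((k j : ℝ)) ^ 2) ^ (4 * α)) *
              ‖∑' j : Fin n → ℤ, u j * w (k - j)‖ ^ 2
          ≤ C ^ 2 *
            (∑' k : Fin n → ℤ,
              (1 + Real.sqrt (∑ j, ((k j : ℝ)) ^ 2) ^ (4 * α)) * ‖u k‖ ^ 2) *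
            (∑' k : Fin n → ℤ,
              (1 + Real.sqrt (∑ j, ((k j : ℝ)) ^ 2) ^ (4 * α)) * ‖w k‖ ^ 2) := by
  have hs : (n : ℝ) < 4 * α := by linarith
  have hs0 : 0 ≤ 4 * α := n.cast_nonneg.trans hs.le
  have hZ := summable_inv_one_add_sqrt_sum_sq_rpow hs
  have hZpos : 0 < ∑' k : Fin n → ℤ, (1 + √(∑ i, (k i : ℝ) ^ 2) ^ (4 * α))⁻¹ :=
    hZ.tsum_pos (fun k => by positivity) 0 (by positivity)
  refine ⟨√(4 * 2 ^ (4 * α) * ∑' k : Fin n → ℤ, (1 + √(∑ i, (k i : ℝ) ^ 2) ^ (4 * α))⁻¹),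
    by positivity, fun u w hu hw => ?_⟩
  rw [Real.sq_sqrt (by positivity)]
  exact summable_conv_and_tsum_weight_mul_norm_conv_sq_le (fun k => by positivity)
    (one_add_sqrt_sum_sq_rpow_le hs0) hZ hu hw

/-- Banach-algebra (product) inequality for the `X_α` spaces at the level of
Fourier coefficients: for `α > n/4` the convolution of two families with finite
`X_α`-norm is well defined and `‖u * w‖_{X_α} ≤ C ‖u‖_{X_α} ‖w‖_{X_α}`. -/
theorem xAlpha_convolution_algebra
    (n : ℕ) (hn : 0 < n) (α : ℝ) (hα : (n : ℝ) / 4 < α) :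
    ∃ C : ℝ, 0 < C ∧
      ∀ u w : (Fin n → ℤ) → ℂ,
        Summable (fun k : Fin n → ℤ =>
          (1 + Real.sqrt (∑ j, ((k j : ℝ)) ^ 2) ^ (4 * α)) * ‖u k‖ ^ 2) →
        Summable (fun k : Fin n → ℤ =>
          (1 + Real.sqrt (∑ j, ((k j : ℝ)) ^ 2) ^ (4 * α)) * ‖w k‖ ^ 2) →
        (∀ k : Fin n → ℤ, Summable (fun j : Fin n → ℤ => u j * w (k - j))) ∧
        ∑' k : Fin n → ℤ,
            (1 + Real.sqrt (∑ j, ((k j : ℝ)) ^ 2) ^ (4 * α)) *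
              ‖∑' j : Fin n → ℤ, u j * w (k - j)‖ ^ 2
          ≤ C ^ 2 *
            (∑' k : Fin n → ℤ,
              (1 + Real.sqrt (∑ j, ((k j : ℝ)) ^ 2) ^ (4 * α)) * ‖u k‖ ^ 2) *
            (∑' k : Fin n → ℤ,
              (1 + Real.sqrt (∑ j, ((k j : ℝ)) ^ 2) ^ (4 * α)) * ‖w k‖ ^ 2) :=
  xAlpha_convolution_algebra_general n α hα
end

section
/- Let θ, v ∈ ℝ, t ≥ 0, M ≥ 0, and let a, b ∈ ℂ with |a| ≤ M and |b| ≤ M. Then |e^{−it(v + θ|a|²)} a − e^{−it(v + θ|b|²)} b| ≤ (1 + 2|θ| M² t) |a − b|. -/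
/-!
The phase factor `e^{iφ(z)}`, `φ(z) = -t(v + θ|z|²)`, has modulus one, so splitting
`e^{iφ(a)} a - e^{iφ(b)} b = e^{iφ(a)} (a - b) + (e^{iφ(a)} - e^{iφ(b)}) b` bounds the left side by
`|a - b| + |φ(a) - φ(b)| M`, as `s ↦ e^{is}` is 1-Lipschitz. The phase difference is
`t |θ| · ||a|² - |b|²| ≤ t |θ| · 2M |a - b|`.
-/

open Complex

lemma norm_exp_I_mul_ofReal_sub_exp_I_mul_ofReal_le (x y : ℝ) :
    ‖exp (I * x) - exp (I * y)‖ ≤ |x - y| := by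
  have factor : exp (I * x) - exp (I * y) = exp (I * y) * (exp (I * ↑(x - y)) - 1) := by
    rw [mul_sub, ← exp_add]
    push_cast
    ring_nf
  rw [factor, norm_mul, norm_exp_I_mul_ofReal, one_mul]
  exact Real.norm_exp_I_mul_ofReal_sub_one_le

lemma norm_mul_sub_mul_le {R : Type*} [SeminormedRing R] (u w a b : R) :
    ‖u * a - w * b‖ ≤ ‖u‖ * ‖a - b‖ + ‖u - w‖ * ‖b‖ :=
  calc ‖u * a - w * b‖ = ‖u * (a - b) + (u - w) * b‖ := by noncomm_ring
    _ ≤ ‖u‖ * ‖a - b‖ + ‖u - w‖ * ‖b‖ :=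
      (norm_add_le _ _).trans (add_le_add (norm_mul_le _ _) (norm_mul_le _ _))

lemma abs_norm_sq_sub_norm_sq_le {E : Type*} [SeminormedAddCommGroup E] {M : ℝ} {a b : E}
    (ha : ‖a‖ ≤ M) (hb : ‖b‖ ≤ M) : |‖a‖ ^ 2 - ‖b‖ ^ 2| ≤ 2 * M * ‖a - b‖ := by
  rw [sq_sub_sq, abs_mul, abs_of_nonneg (by positivity : 0 ≤ ‖a‖ + ‖b‖)]
  exact mul_le_mul (by linarith) (abs_norm_sub_norm_le a b) (abs_nonneg _)
    (by linarith [norm_nonneg a])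

theorem phase_flow_pointwise_lipschitz_general
    (θ v t M : ℝ) (ht : 0 ≤ t) (a b : ℂ)
    (ha : ‖a‖ ≤ M) (hb : ‖b‖ ≤ M) :
    ‖Complex.exp (-Complex.I * (t : ℂ) * ((v : ℂ) + (θ : ℂ) * ((‖a‖ : ℝ) : ℂ) ^ 2)) * a -
        Complex.exp (-Complex.I * (t : ℂ) * ((v : ℂ) + (θ : ℂ) * ((‖b‖ : ℝ) : ℂ) ^ 2)) * b‖
      ≤ (1 + 2 * |θ| * M ^ 2 * t) * ‖a - b‖ := by
  set φ : ℂ → ℝ := fun z ↦ -(t * (v + θ * ‖z‖ ^ 2))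
  have phase (z : ℂ) : -I * t * (v + θ * ((‖z‖ : ℝ) : ℂ) ^ 2) = I * φ z := by
    simp only [φ]
    push_cast
    ring
  have phase_sub : |φ a - φ b| = t * |θ| * |‖a‖ ^ 2 - ‖b‖ ^ 2| := by
    rw [show φ a - φ b = t * θ * (‖b‖ ^ 2 - ‖a‖ ^ 2) by simp only [φ]; ring,
      abs_mul, abs_mul, abs_of_nonneg ht, abs_sub_comm]
  have hM : 0 ≤ M := (norm_nonneg a).trans ha
  rw [phase a, phase b]
  calc _ ≤ ‖exp (I * φ a)‖ * ‖a - b‖ + ‖exp (I * φ a) - exp (I * φ b)‖ * ‖b‖ :=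
        norm_mul_sub_mul_le _ _ _ _
    _ ≤ 1 * ‖a - b‖ + t * |θ| * (2 * M * ‖a - b‖) * M := by
        rw [norm_exp_I_mul_ofReal]
        gcongr
        calc _ ≤ |φ a - φ b| := norm_exp_I_mul_ofReal_sub_exp_I_mul_ofReal_le _ _
          _ ≤ t * |θ| * (2 * M * ‖a - b‖) := by
            rw [phase_sub]
            gcongr
            exact abs_norm_sq_sub_norm_sq_le ha hb
    _ = (1 + 2 * |θ| * M ^ 2 * t) * ‖a - b‖ := by ring

/-- Pointwise Lipschitz stability of the nonlinear phase flow
`a ↦ e^{-it(v+θ|a|²)}a`: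
`|e^{-it(v+θ|a|²)}a − e^{-it(v+θ|b|²)}b| ≤ (1 + 2|θ|M²t)|a − b|` for `|a|,|b| ≤ M`. -/
theorem phase_flow_pointwise_lipschitz
    (θ v t M : ℝ) (ht : 0 ≤ t) (hM : 0 ≤ M) (a b : ℂ)
    (ha : ‖a‖ ≤ M) (hb : ‖b‖ ≤ M) :
    ‖Complex.exp (-Complex.I * (t : ℂ) * ((v : ℂ) + (θ : ℂ) * ((‖a‖ : ℝ) : ℂ) ^ 2)) * a -
        Complex.exp (-Complex.I * (t : ℂ) * ((v : ℂ) + (θ : ℂ) * ((‖b‖ : ℝ) : ℂ) ^ 2)) * b‖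
      ≤ (1 + 2 * |θ| * M ^ 2 * t) * ‖a - b‖ :=
  phase_flow_pointwise_lipschitz_general θ v t M ht a b ha hb
end
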